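/- arXiv:2411.06401 — 3 statements merged into one kernel-verified Lean document; each statement's English description precedes it below -/
import Mathlib

section
/- Let U be a finite dimensional real vector space with a symmetric bilinear form B, let β₁,…,β_m ∈ U be linearly independent non-isotropic vectors, and let u ∈ U. Then the composition of reflections s_{β₁}∘⋯∘s_{β_m} fixes u if and only if each reflection s_{β_i} fixes u. -/
/-- The reflection of `U` with respect to a non-isotropic vector `β`:
`v ↦ v - (2 B(β,v)/B(β,β)) • β`. -/
noncomputable def reflMap {U : Type*} [AddCommGroup U] [Module ℝ U]
    (B : LinearMap.BilinForm ℝ U) (β : U) : U →ₗ[ℝ] U :=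
  LinearMap.id - (2 / B β β) • (LinearMap.toSpanSingleton ℝ U β ∘ₗ B β)

lemma reflMap_apply {U : Type*} [AddCommGroup U] [Module ℝ U]
    (B : LinearMap.BilinForm ℝ U) (β u : U) :
    reflMap B β u = u - ((2 / B β β) * B β u) • β := by
  simp [reflMap, LinearMap.toSpanSingleton_apply, smul_smul]

lemma prod_sub_mem {U : Type*} [AddCommGroup U] [Module ℝ U]
    (B : LinearMap.BilinForm ℝ U) : ∀ {m : ℕ} (γ : Fin m → U) (u : U),
    (List.ofFn fun i => reflMap B (γ i)).prod u - u ∈ Submodule.span ℝ (Set.range γ)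
  | 0, γ, u => by simp
  | (m+1), γ, u => by
    rw [List.ofFn_succ, List.prod_cons, Module.End.mul_apply]
    set v := (List.ofFn fun i : Fin m => reflMap B (γ i.succ)).prod u with hv
    have h1 : v - u ∈ Submodule.span ℝ (Set.range γ) := by
      refine Submodule.span_mono ?_ (prod_sub_mem B (fun i => γ i.succ) u)
      rintro _ ⟨i, rfl⟩; exact ⟨i.succ, rfl⟩
    have h2 : reflMap B (γ 0) v - v ∈ Submodule.span ℝ (Set.range γ) := by
      rw [reflMap_apply, sub_sub_cancel_left, ← neg_smul]
      exact Submodule.smul_mem _ _ (Submodule.subset_span ⟨0, rfl⟩)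
    have := Submodule.add_mem _ h2 h1
    simpa using this

lemma reflMap_forward {U : Type*} [AddCommGroup U] [Module ℝ U]
    (B : LinearMap.BilinForm ℝ U) : ∀ {m : ℕ} (β : Fin m → U),
    LinearIndependent ℝ β → (∀ i, B (β i) (β i) ≠ 0) → ∀ u : U,
    (List.ofFn fun i => reflMap B (β i)).prod u = u → ∀ i, reflMap B (β i) u = u
  | 0, β, _, _, u, _, i => i.elim0
  | (m+1), β, hli, hni, u, hu, i => by
    have hcons : LinearIndependent ℝ (Fin.cons (β 0) (Fin.tail β) : Fin (m+1) → U) := by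
      rw [Fin.cons_self_tail]; exact hli
    rw [linearIndependent_fin_cons] at hcons
    have hli' := hcons.1
    have hnot := hcons.2
    rw [List.ofFn_succ, List.prod_cons, Module.End.mul_apply] at hu
    set v := (List.ofFn fun i : Fin m => reflMap B (β i.succ)).prod u with hv
    rw [reflMap_apply] at hu
    have hvu : v - u ∈ Submodule.span ℝ (Set.range fun i : Fin m => β i.succ) :=
      prod_sub_mem B (fun i => β i.succ) u
    have hc : ((2 / B (β 0) (β 0)) * B (β 0) v) • β 0 = v - u := by
      rw [← hu]; abel
    have hc0 : (2 / B (β 0) (β 0)) * B (β 0) v = 0 := by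
      by_contra h
      apply hnot
      have hβ0 : β 0 = ((2 / B (β 0) (β 0)) * B (β 0) v)⁻¹ • (v - u) := by
        rw [← hc, smul_smul, inv_mul_cancel₀ h, one_smul]
      rw [hβ0]
      exact Submodule.smul_mem _ _ hvu
    have hveq : v = u := by
      have := hu
      rw [hc0, zero_smul, sub_zero] at this
      exact this
    have htail : ∀ j : Fin m, reflMap B (β j.succ) u = u :=
      reflMap_forward B (fun j => β j.succ) hli' (fun j => hni j.succ) u hveq
    refine Fin.cases ?_ (fun j => htail j) i
    rw [reflMap_apply, ← hveq, hc0, zero_smul, sub_zero]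

/-- If `β₁, …, β_m` are linearly independent non-isotropic vectors of a finite dimensional
real space with symmetric bilinear form `B`, then `s_{β₁} ∘ ⋯ ∘ s_{β_m}` fixes `u` iff
every `s_{β_i}` fixes `u`. -/
theorem stmt0 {U : Type*} [AddCommGroup U] [Module ℝ U] [FiniteDimensional ℝ U]
    (B : LinearMap.BilinForm ℝ U) (hB : B.IsSymm) {m : ℕ} (β : Fin m → U)
    (hli : LinearIndependent ℝ β) (hni : ∀ i, B (β i) (β i) ≠ 0) (u : U) :
    (List.ofFn (fun i => reflMap B (β i))).prod u = u ↔ ∀ i, reflMap B (β i) u = u := by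
  constructor
  · exact fun hu => reflMap_forward B β hli hni u hu
  · intro h
    have key : ∀ (l : List (U →ₗ[ℝ] U)), (∀ f ∈ l, f u = u) → l.prod u = u := by
      intro l
      induction l with
      | nil => simp
      | cons a l ih =>
        intro hl
        rw [List.prod_cons, Module.End.mul_apply,
          ih (fun f hf => hl f (List.mem_cons_of_mem _ hf)), hl a (List.mem_cons_self)]
    refine key _ ?_
    intro f hf
    obtain ⟨i, rfl⟩ := List.mem_ofFn.1 hf
    exact h i
end

section
/- Let V be a real vector space with symmetric bilinear form B and let R be a subspace of the radical of B. Then on tensors in R ⊗ V the Eichler–Siegel semigroup operation ∘ coincides with addition: φ₁ ∘ φ₂ = φ₁ + φ₂ for all φ₁, φ₂ ∈ R ⊗ V; consequently E restricted to R ⊗ V is a group homomorphism from (R ⊗ V, +) to GL(V). -/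
/-- On tensors `Σ fᵢ ⊗ gᵢ` with all `fᵢ` in the radical of the symmetric bilinear form
`B`, the Eichler–Siegel semigroup operation coincides with addition:
`E(φ₁) ∘ E(φ₂) = E(φ₁ + φ₂)`, so `E` restricted to `R ⊗ V` is a homomorphism from
`(R ⊗ V, +)` to `GL(V)`. -/
theorem stmt12 {V : Type*} [AddCommGroup V] [Module ℝ V]
    (B : LinearMap.BilinForm ℝ V) (hB : B.IsSymm) {m k : ℕ}
    (f₁ g₁ : Fin m → V) (f₂ g₂ : Fin k → V)
    (hf₁ : ∀ i, f₁ i ∈ LinearMap.ker B) (hf₂ : ∀ j, f₂ j ∈ LinearMap.ker B) (v : V) :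
    (fun u => u - ∑ i, B (g₁ i) u • f₁ i)
        ((fun u => u - ∑ j, B (g₂ j) u • f₂ j) v)
      = v - (∑ i, B (g₁ i) v • f₁ i + ∑ j, B (g₂ j) v • f₂ j) := by
  have key : ∀ i j, B (g₁ i) (f₂ j) = 0 := by
    intro i j
    have h := hB.eq (f₂ j) (g₁ i)
    rw [LinearMap.mem_ker.mp (hf₂ j)] at h
    simpa using h.symm
  simp only [map_sub, map_sum, LinearMap.sum_apply, smul_eq_mul, map_smul,
    LinearMap.smul_apply, key, mul_zero, smul_zero, Finset.sum_const_zero, sub_zero]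
  abel
end

section
/- Let W̃ be the hyperbolic cover of a tubular elliptic Weyl group W, with central element z = Ẽ(a ⊗ b) and canonical projection φ: W̃ → W (restriction of the action to V). If ℓ_T̃(c̃ zⁱ) = ℓ_T̃(c̃) for all i ∈ ℤ, then φ maps the union over i ∈ ℤ of the sets Red_T̃(c̃ zⁱ) bijectively onto Red_T(c); in particular ℓ_T̃(c̃) = ℓ_T(c). -/
/-- The reflection length `ℓ_T(w)`: the minimal length of a factorization of `w` into
elements of `T`. -/
noncomputable def TLen {G : Type*} [Group G] (T : Set G) (w : G) : ℕ :=
  sInf {n | ∃ l : List G, (∀ x ∈ l, x ∈ T) ∧ l.prod = w ∧ l.length = n}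

/-- `Red_T(w)`: the set of minimal-length `T`-factorizations of `w`. -/
noncomputable def RedT {G : Type*} [Group G] (T : Set G) (w : G) : Set (List G) :=
  {l | (∀ x ∈ l, x ∈ T) ∧ l.prod = w ∧ l.length = TLen T w}

lemma map_inj_aux {Gt G : Type*} [Group Gt] [Group G] (φ : Gt →* G)
    (T' : Set Gt) (hinj : Set.InjOn φ T') :
    ∀ l₁ l₂ : List Gt, (∀ x ∈ l₁, x ∈ T') → (∀ x ∈ l₂, x ∈ T') →
      l₁.map φ = l₂.map φ → l₁ = l₂ := by
  intro l₁
  induction l₁ with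
  | nil => intro l₂ _ _ h; cases l₂ <;> simp_all
  | cons a l ih =>
    intro l₂ h1 h2 h
    cases l₂ with
    | nil => simp at h
    | cons b l' =>
      simp only [List.map_cons, List.cons.injEq] at h
      have hab : a = b := hinj (h1 a (by simp)) (h2 b (by simp)) h.1
      have htail := ih l' (fun x hx => h1 x (by simp [hx]))
        (fun x hx => h2 x (by simp [hx])) h.2
      simp [hab, htail]

/-- Let `φ : W̃ → W` be a central extension with central element `z` generating `ker φ`,
`T`, `T̃` the sets of reflections with `φ '' T̃ = T` and unique lifts. If
`ℓ_T̃(c̃ zⁱ) = ℓ_T̃(c̃)` for all `i ∈ ℤ`, then `φ` maps `⋃ᵢ Red_T̃(c̃ zⁱ)` bijectively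
onto `Red_T(c)`; in particular `ℓ_T̃(c̃) = ℓ_T(c)`. -/
theorem stmt17 {Gt G : Type*} [Group Gt] [Group G]
    (φ : Gt →* G) (hsurj : Function.Surjective φ)
    (z : Gt) (hz : z ∈ Subgroup.center Gt)
    (hker : φ.ker = Subgroup.zpowers z)
    (T : Set G) (T' : Set Gt)
    (hmap : φ '' T' = T) (hinj : Set.InjOn φ T')
    (hTconj : ∀ t ∈ T, ∀ g : G, g⁻¹ * t * g ∈ T)
    (hT'conj : ∀ t ∈ T', ∀ g : Gt, g⁻¹ * t * g ∈ T')
    (hgen : Subgroup.closure T' = ⊤)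
    (c' : Gt) (c : G) (hc : c = φ c')
    (hlen : ∀ i : ℤ, TLen T' (c' * z ^ i) = TLen T' c') :
    Set.BijOn (List.map φ) (⋃ i : ℤ, RedT T' (c' * z ^ i)) (RedT T c) ∧
      TLen T' c' = TLen T c := by
  classical
  subst hc
  have hφz : φ z = 1 := by
    have hz' : z ∈ φ.ker := by rw [hker]; exact Subgroup.mem_zpowers z
    exact hz'
  -- projecting a T'-factorization of c' * z ^ i yields a T-factorization of φ c'
  have proj : ∀ (i : ℤ) (l : List Gt), (∀ x ∈ l, x ∈ T') → l.prod = c' * z ^ i →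
      (∀ x ∈ l.map φ, x ∈ T) ∧ (l.map φ).prod = φ c' := by
    intro i l hlT hlp
    constructor
    · intro x hx
      obtain ⟨y, hy, rfl⟩ := List.mem_map.mp hx
      exact hmap ▸ ⟨y, hlT y hy, rfl⟩
    · rw [← map_list_prod, hlp, map_mul, map_zpow, hφz, one_zpow, mul_one]
  -- lifting
  have lift_ex : ∀ t, t ∈ T → ∃ t', t' ∈ T' ∧ φ t' = t := by
    intro t ht
    rw [← hmap] at ht
    obtain ⟨t', h1, h2⟩ := ht
    exact ⟨t', h1, h2⟩
  choose lift hlift1 hlift2 using lift_ex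
  have liftlist : ∀ l : List G, (∀ x ∈ l, x ∈ T) →
      ∃ l' : List Gt, (∀ x ∈ l', x ∈ T') ∧ l'.map φ = l := by
    intro l
    induction l with
    | nil => exact fun _ => ⟨[], by simp, by simp⟩
    | cons a m ih =>
      intro h
      obtain ⟨m', h1, h2⟩ := ih fun x hx => h x (List.mem_cons_of_mem a hx)
      refine ⟨lift a (h a List.mem_cons_self) :: m', ?_, ?_⟩
      · intro x hx
        rcases List.mem_cons.mp hx with rfl | hx
        · exact hlift1 _ _
        · exact h1 x hx
      · simp [h2, hlift2]
  have key2 : ∀ l : List G, (∀ x ∈ l, x ∈ T) → l.prod = φ c' →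
      ∃ (i : ℤ) (l' : List Gt), (∀ x ∈ l', x ∈ T') ∧ l'.prod = c' * z ^ i ∧
        l'.map φ = l := by
    intro l hlT hlp
    obtain ⟨l', h1, h2⟩ := liftlist l hlT
    have hk : c'⁻¹ * l'.prod ∈ φ.ker := by
      have hφp : φ l'.prod = φ c' := by rw [map_list_prod, h2, hlp]
      simp [MonoidHom.mem_ker, hφp]
    rw [hker] at hk
    obtain ⟨i, hi⟩ := Subgroup.mem_zpowers_iff.mp hk
    refine ⟨i, l', h1, ?_, h2⟩
    rw [hi, mul_inv_cancel_left]
  -- lower bound for TLen T' c'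
  have step1 : ∀ n, (∃ l : List G, (∀ x ∈ l, x ∈ T) ∧ l.prod = φ c' ∧ l.length = n) →
      TLen T' c' ≤ n := by
    rintro n ⟨l, h1, h2, rfl⟩
    obtain ⟨i, l', hl'1, hl'2, hl'3⟩ := key2 l h1 h2
    have hle : TLen T' (c' * z ^ i) ≤ l'.length := Nat.sInf_le ⟨l', hl'1, hl'2, rfl⟩
    rw [hlen i] at hle
    calc TLen T' c' ≤ l'.length := hle
      _ = l.length := by rw [← hl'3, List.length_map]
  have step2 : ∀ (i : ℤ) n,
      (∃ l' : List Gt, (∀ x ∈ l', x ∈ T') ∧ l'.prod = c' * z ^ i ∧ l'.length = n) →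
      TLen T (φ c') ≤ n := by
    rintro i n ⟨l', h1, h2, rfl⟩
    obtain ⟨ht, hp⟩ := proj i l' h1 h2
    have hle : TLen T (φ c') ≤ (l'.map φ).length := Nat.sInf_le ⟨l'.map φ, ht, hp, rfl⟩
    simpa using hle
  have hTlen : TLen T' c' = TLen T (φ c') := by
    by_cases hA : {n | ∃ l : List G, (∀ x ∈ l, x ∈ T) ∧ l.prod = φ c' ∧ l.length = n}.Nonempty
    · have hmem := Nat.sInf_mem hA
      obtain ⟨l, h1, h2, h3⟩ := hmem
      have le1 : TLen T' c' ≤ TLen T (φ c') := step1 _ ⟨l, h1, h2, h3⟩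
      obtain ⟨i, l', hl'1, hl'2, hl'3⟩ := key2 l h1 h2
      have hBi : {n | ∃ m : List Gt,
          (∀ x ∈ m, x ∈ T') ∧ m.prod = c' * z ^ i ∧ m.length = n}.Nonempty :=
        ⟨l'.length, l', hl'1, hl'2, rfl⟩
      have hmemB := Nat.sInf_mem hBi
      have le2 : TLen T (φ c') ≤ TLen T' (c' * z ^ i) := step2 i _ hmemB
      rw [hlen i] at le2
      omega
    · have hzero : TLen T (φ c') = 0 := by
        rw [TLen, Set.not_nonempty_iff_eq_empty.mp hA, Nat.sInf_empty]
      have hB0 : ¬ {n | ∃ m : List Gt,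
          (∀ x ∈ m, x ∈ T') ∧ m.prod = c' * z ^ (0 : ℤ) ∧ m.length = n}.Nonempty := by
        rintro ⟨n, m, h1, h2, h3⟩
        obtain ⟨ht, hp⟩ := proj 0 m h1 h2
        exact hA ⟨(m.map φ).length, m.map φ, ht, hp, rfl⟩
      have hz0 : TLen T' (c' * z ^ (0 : ℤ)) = 0 := by
        rw [TLen, Set.not_nonempty_iff_eq_empty.mp hB0, Nat.sInf_empty]
      rw [← hlen 0, hz0, hzero]
  refine ⟨⟨?_, ?_, ?_⟩, hTlen⟩
  · -- MapsTo
    rintro l hl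
    obtain ⟨i, h1, h2, h3⟩ := Set.mem_iUnion.mp hl
    obtain ⟨ht, hp⟩ := proj i l h1 h2
    refine ⟨ht, hp, ?_⟩
    rw [List.length_map, h3, hlen i, hTlen]
  · -- InjOn
    rintro l₁ hl₁ l₂ hl₂ heq
    obtain ⟨i₁, h₁⟩ := Set.mem_iUnion.mp hl₁
    obtain ⟨i₂, h₂⟩ := Set.mem_iUnion.mp hl₂
    exact map_inj_aux φ T' hinj l₁ l₂ h₁.1 h₂.1 heq
  · -- SurjOn
    rintro m ⟨h1, h2, h3⟩
    obtain ⟨i, l', hl'1, hl'2, hl'3⟩ := key2 m h1 h2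
    refine ⟨l', Set.mem_iUnion.mpr ⟨i, hl'1, hl'2, ?_⟩, hl'3⟩
    rw [hlen i, hTlen, ← h3, ← hl'3, List.length_map]
end
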